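/- Let ℓ be L-Lipschitz in its first argument and bounded by b. Suppose M, N, K are positive integers with K ≤ M ≤ N, and {Zᵢ}_{i∈ℐ} are mutually independent discrete random variables on a finite set 𝒵 with ℐ_t ⊆ ℐ_p ⊆ ℐ, |ℐ_t| = K, |ℐ_p| = M, |ℐ| = N. Then the selection-based participation gap satisfies |𝔼[(1/N)Σ_{i∈ℐ}ℓ(h,Zᵢ)log(1/P_{Z^ℐ})] − (1/K)Σ_{i∈ℐ_t}𝔼[ℓ(h,Zᵢ)log(1/P_{Zᵢ})]| ≤ b(3 − 2M/N)·H(Z^ℐ) + b(2 − 2K/M − 1/K)·H(Z^{ℐ_p}) + (b/K)·Σ_{i∈ℐ_p∖ℐ_t} H(Zᵢ). -/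

import Mathlib

/-!
Write `P = ∏ᵢ pᵢ` for the joint law. Since `log (1 / P z) = ∑ⱼ log (1 / pⱼ (z j))`, independence
gives `H(Z^ℐ) = ∑ᵢ H(Zᵢ)` and
`𝔼[ℓ(Zᵢ) log (1 / P)] = Dᵢ + 𝔼[ℓ(Zᵢ)] · ∑_{j ≠ i} H(Zⱼ)`, where `Dᵢ = 𝔼[ℓ(Zᵢ) log (1 / pᵢ(Zᵢ))]`.
As `0 ≤ ℓ ≤ b`, we get `0 ≤ Dᵢ ≤ b H(Zᵢ)` and the `i`-th term lies in
`[Dᵢ, Dᵢ + b (H(Z^ℐ) - H(Zᵢ))]`. Averaging bounds the gap by `b (H(Z^ℐ) - T / N)` with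
`T = ∑_{i ∈ ℐ_t} H(Zᵢ)`, and this is at most the stated bound because `T ≤ H(Z^{ℐ_p}) ≤ H(Z^ℐ)`
and `1 ≤ K ≤ M ≤ N`.
-/

open Finset Real

noncomputable def entropy {α : Type*} [Fintype α] (q : α → ℝ) : ℝ :=
  ∑ x, q x * log (1 / q x)

section ProbabilityVector

variable {α : Type*} [Fintype α] {q : α → ℝ}

lemma le_one_of_sum_eq_one (hq0 : ∀ x, 0 ≤ q x) (hq1 : ∑ x, q x = 1) (x : α) : q x ≤ 1 :=
  hq1 ▸ single_le_sum (fun y _ => hq0 y) (mem_univ x)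

lemma mul_log_one_div_nonneg {r : ℝ} (h0 : 0 ≤ r) (h1 : r ≤ 1) : 0 ≤ r * log (1 / r) := by
  simpa [negMulLog, one_div, log_inv] using negMulLog_nonneg h0 h1

lemma entropy_nonneg (hq0 : ∀ x, 0 ≤ q x) (hq1 : ∑ x, q x = 1) : 0 ≤ entropy q :=
  sum_nonneg fun x _ => mul_log_one_div_nonneg (hq0 x) (le_one_of_sum_eq_one hq0 hq1 x)

variable {ℓ : α → ℝ} {b : ℝ}

lemma sum_mul_mul_log_nonneg (hq0 : ∀ x, 0 ≤ q x) (hq1 : ∑ x, q x = 1) (hℓ0 : ∀ x, 0 ≤ ℓ x) :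
    0 ≤ ∑ x, q x * ℓ x * log (1 / q x) :=
  sum_nonneg fun x _ => by
    rw [mul_right_comm]
    exact mul_nonneg (mul_log_one_div_nonneg (hq0 x) (le_one_of_sum_eq_one hq0 hq1 x)) (hℓ0 x)

lemma sum_mul_mul_log_le (hq0 : ∀ x, 0 ≤ q x) (hq1 : ∑ x, q x = 1) (hℓb : ∀ x, ℓ x ≤ b) :
    ∑ x, q x * ℓ x * log (1 / q x) ≤ b * entropy q := by
  rw [entropy, mul_sum]
  refine sum_le_sum fun x _ => ?_
  rw [mul_right_comm, mul_comm b]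
  exact mul_le_mul_of_nonneg_left (hℓb x)
    (mul_log_one_div_nonneg (hq0 x) (le_one_of_sum_eq_one hq0 hq1 x))

lemma sum_mul_le_of_forall_le (hq0 : ∀ x, 0 ≤ q x) (hq1 : ∑ x, q x = 1) (hℓb : ∀ x, ℓ x ≤ b) :
    ∑ x, q x * ℓ x ≤ b :=
  calc ∑ x, q x * ℓ x ≤ ∑ x, q x * b :=
        sum_le_sum fun x _ => mul_le_mul_of_nonneg_left (hℓb x) (hq0 x)
    _ = b := by rw [← sum_mul, hq1, one_mul]

end ProbabilityVector

lemma prod_mul_log_one_div_prod {ι : Type*} (s : Finset ι) (w : ι → ℝ) :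
    (∏ i ∈ s, w i) * log (1 / ∏ i ∈ s, w i) = ∑ j ∈ s, (∏ i ∈ s, w i) * log (1 / w j) := by
  by_cases hw : ∀ i ∈ s, w i ≠ 0
  · simp only [one_div, log_inv, log_prod hw, ← mul_sum, sum_neg_distrib]
  · push Not at hw
    obtain ⟨i, hi, hwi⟩ := hw
    simp [prod_eq_zero hi hwi]

section ProductWeights

variable {ι Z : Type*} [Fintype ι] [DecidableEq ι] [Fintype Z] {p : ι → Z → ℝ}

lemma sum_prod_mul_prod (hp1 : ∀ i, ∑ x, p i x = 1) (S : Finset ι) (g : ι → Z → ℝ) :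
    ∑ z : ι → Z, (∏ k, p k (z k)) * ∏ k ∈ S, g k (z k) = ∏ k ∈ S, ∑ x, p k x * g k x := by
  have hfactor : ∀ k, ∑ x, p k x * (if k ∈ S then g k x else 1)
      = if k ∈ S then ∑ x, p k x * g k x else 1 := fun k => by
    split_ifs <;> simp [hp1]
  calc ∑ z : ι → Z, (∏ k, p k (z k)) * ∏ k ∈ S, g k (z k)
      = ∑ z : ι → Z, ∏ k, p k (z k) * (if k ∈ S then g k (z k) else 1) := by
        simp only [← Fintype.prod_ite_mem S, ← prod_mul_distrib]
    _ = ∏ k, ∑ x, p k x * (if k ∈ S then g k x else 1) :=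
        (Fintype.prod_sum fun k x => p k x * (if k ∈ S then g k x else 1)).symm
    _ = ∏ k ∈ S, ∑ x, p k x * g k x := by simp only [hfactor, Fintype.prod_ite_mem]

lemma sum_prod_mul_apply (hp1 : ∀ i, ∑ x, p i x = 1) (i : ι) (f : Z → ℝ) :
    ∑ z : ι → Z, (∏ k, p k (z k)) * f (z i) = ∑ x, p i x * f x := by
  simpa using sum_prod_mul_prod hp1 {i} fun _ => f

lemma sum_prod_mul_apply_mul_apply (hp1 : ∀ i, ∑ x, p i x = 1) {i j : ι} (hij : i ≠ j)
    (f g : Z → ℝ) :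
    ∑ z : ι → Z, (∏ k, p k (z k)) * (f (z i) * g (z j))
      = (∑ x, p i x * f x) * ∑ x, p j x * g x := by
  simpa [prod_pair hij, hij.symm] using
    sum_prod_mul_prod hp1 {i, j} fun k => if k = i then f else g

lemma entropy_pi (hp1 : ∀ i, ∑ x, p i x = 1) :
    entropy (fun z : ι → Z => ∏ i, p i (z i)) = ∑ i, entropy (p i) := by
  simp only [entropy, prod_mul_log_one_div_prod]
  rw [sum_comm]
  exact sum_congr rfl fun j _ => sum_prod_mul_apply hp1 j fun x => log (1 / p j x)

lemma sum_prod_mul_apply_mul_log (hp1 : ∀ i, ∑ x, p i x = 1) (i : ι) (f : Z → ℝ) :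
    ∑ z : ι → Z, (∏ k, p k (z k)) * f (z i) * log (1 / ∏ k, p k (z k))
      = ∑ x, p i x * f x * log (1 / p i x)
        + (∑ x, p i x * f x) * ∑ j ∈ univ.erase i, entropy (p j) := by
  have hsplit : ∀ z : ι → Z, (∏ k, p k (z k)) * f (z i) * log (1 / ∏ k, p k (z k))
      = ∑ j, (∏ k, p k (z k)) * (f (z i) * log (1 / p j (z j))) := fun z => by
    rw [mul_right_comm, prod_mul_log_one_div_prod, sum_mul]
    exact sum_congr rfl fun j _ => by ring
  simp only [hsplit]
  rw [sum_comm, ← add_sum_erase _ _ (mem_univ i), mul_sum]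
  congr 1
  · simpa only [mul_assoc] using sum_prod_mul_apply hp1 i fun x => f x * log (1 / p i x)
  · exact sum_congr rfl fun j hj =>
      sum_prod_mul_apply_mul_apply hp1 (ne_of_mem_erase hj).symm f fun x => log (1 / p j x)

end ProductWeights

lemma abs_average_sub_average_le {ι : Type*} [Fintype ι] [DecidableEq ι] {t : Finset ι}
    (ht : t.Nonempty) {Q D h : ι → ℝ} {b : ℝ} (hb : 0 ≤ b) (hh0 : ∀ i, 0 ≤ h i)
    (hD0 : ∀ i, 0 ≤ D i) (hDb : ∀ i, D i ≤ b * h i) (hDQ : ∀ i, D i ≤ Q i)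
    (hQD : ∀ i, Q i ≤ D i + b * (∑ j, h j - h i)) :
    |1 / (Fintype.card ι : ℝ) * ∑ i, Q i - 1 / (#t : ℝ) * ∑ i ∈ t, D i|
      ≤ b * (∑ i, h i - (∑ i ∈ t, h i) / Fintype.card ι) := by
  set N : ℝ := (Fintype.card ι : ℝ)
  set K : ℝ := (#t : ℝ)
  set H := ∑ i, h i
  set T := ∑ i ∈ t, h i
  have hK0 : 0 < K := by simpa [K] using ht.card_pos
  have hKN : K ≤ N := by simpa [K, N] using card_le_univ t
  have hN0 : 0 < N := hK0.trans_le hKN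
  have hsplit : ∀ f : ι → ℝ, ∑ i, f i = ∑ i ∈ t, f i + ∑ i ∈ tᶜ, f i :=
    fun f => (sum_add_sum_compl t f).symm
  have hQ_le : ∑ i, Q i ≤ ∑ i ∈ t, D i + ∑ i ∈ tᶜ, D i + b * (N * H - H) := by
    calc ∑ i, Q i ≤ ∑ i, (D i + b * (H - h i)) := sum_le_sum fun i _ => hQD i
      _ = _ := by simp [sum_add_distrib, ← mul_sum, sum_sub_distrib, hsplit D, N, H]
  have hQ_ge : ∑ i ∈ t, D i + ∑ i ∈ tᶜ, D i ≤ ∑ i, Q i :=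
    hsplit D ▸ sum_le_sum fun i _ => hDQ i
  have hDt0 : 0 ≤ ∑ i ∈ t, D i := sum_nonneg fun i _ => hD0 i
  have hDc0 : 0 ≤ ∑ i ∈ tᶜ, D i := sum_nonneg fun i _ => hD0 i
  have hDt : ∑ i ∈ t, D i ≤ b * T := mul_sum t h b ▸ sum_le_sum fun i _ => hDb i
  have hDc : ∑ i ∈ tᶜ, D i ≤ b * (H - T) := by
    have hHT : H - T = ∑ i ∈ tᶜ, h i := by simp only [H, T, hsplit h]; ring
    rw [hHT, mul_sum]
    exact sum_le_sum fun i _ => hDb i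
  have hTK : T ≤ K * H := by
    simpa [K] using sum_le_card_nsmul t h H fun i _ => single_le_sum (fun j _ => hh0 j) (mem_univ i)
  rw [abs_sub_le_iff, div_eq_mul_one_div T N]
  have hu0 : 0 ≤ 1 / N := by positivity
  have huv : 1 / N ≤ 1 / K := one_div_le_one_div_of_le hK0 hKN
  have huN : 1 / N * N = 1 := one_div_mul_cancel hN0.ne'
  have hvK : 1 / K * K = 1 := one_div_mul_cancel hK0.ne'
  constructor
  -- upper: `Q ≤ D + b (H - hᵢ)`, `D ≤ b h` off `t`, and `1 / N ≤ 1 / K` on `t`;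
  -- lower: `D ≤ Q`, `D ≤ b h` on `t`, and `T ≤ K H`
  · linear_combination mul_le_mul_of_nonneg_left hQ_le hu0 + mul_le_mul_of_nonneg_right huv hDt0
      + mul_le_mul_of_nonneg_left hDc hu0 + b * H * huN
  · linear_combination mul_le_mul_of_nonneg_left hQ_ge hu0 + mul_nonneg hu0 hDc0
      + mul_le_mul_of_nonneg_left hDt (sub_nonneg.2 huv)
      + mul_le_mul_of_nonneg_left (mul_le_mul_of_nonneg_left hTK (by positivity : 0 ≤ 1 / K)) hb
      + b * H * hvK

lemma mul_sub_div_le_participation_bound {b K M N H Hs T : ℝ} (hb : 0 ≤ b) (hK : 1 ≤ K)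
    (hKM : K ≤ M) (hMN : M ≤ N) (hT : 0 ≤ T) (hTHs : T ≤ Hs) (hHsH : Hs ≤ H) :
    b * (H - T / N)
      ≤ b * (3 - 2 * M / N) * H + b * (2 - 2 * K / M - 1 / K) * Hs + b / K * (Hs - T) := by
  have hK0 : 0 < K := one_pos.trans_le hK
  have hM0 : 0 < M := hK0.trans_le hKM
  have hN0 : 0 < N := hM0.trans_le hMN
  have hkey : 0 ≤ M * (N - M) * (2 * K * H - T) + (M - K) * (2 * K * N * Hs - M * T) := by
    refine add_nonneg (mul_nonneg (mul_nonneg hM0.le (sub_nonneg.2 hMN)) ?_)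
      (mul_nonneg (sub_nonneg.2 hKM) ?_)
    · nlinarith [mul_nonneg (sub_nonneg.2 hK) (hT.trans (hTHs.trans hHsH))]
    · nlinarith [mul_nonneg (mul_nonneg hK0.le hN0.le) (sub_nonneg.2 hTHs),
        mul_nonneg hT (mul_nonneg (sub_nonneg.2 hK) hN0.le)]
  have hdiff : b * (3 - 2 * M / N) * H + b * (2 - 2 * K / M - 1 / K) * Hs + b / K * (Hs - T)
      - b * (H - T / N)
      = b * (M * (N - M) * (2 * K * H - T) + (M - K) * (2 * K * N * Hs - M * T)) / (K * M * N) := by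
    field_simp
    ring
  have := div_nonneg (mul_nonneg hb hkey) (by positivity : 0 ≤ K * M * N)
  linarith

theorem abs_participation_gap_le {ι Z : Type*} [Fintype ι] [DecidableEq ι] [Fintype Z]
    {p : ι → Z → ℝ} (hp0 : ∀ i x, 0 ≤ p i x) (hp1 : ∀ i, ∑ x, p i x = 1)
    {ℓ : Z → ℝ} {b : ℝ} (hℓ0 : ∀ x, 0 ≤ ℓ x) (hℓb : ∀ x, ℓ x ≤ b) (hb : 0 ≤ b)
    {t : Finset ι} (ht : t.Nonempty) :
    |∑ z : ι → Z, (∏ i, p i (z i)) * (1 / (Fintype.card ι : ℝ) * ∑ i, ℓ (z i)) *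
        log (1 / ∏ i, p i (z i))
      - 1 / (#t : ℝ) * ∑ i ∈ t, ∑ x, p i x * ℓ x * log (1 / p i x)|
    ≤ b * (∑ i, entropy (p i) - (∑ i ∈ t, entropy (p i)) / Fintype.card ι) := by
  have hA : ∀ z : ι → Z, (∏ i, p i (z i)) * (1 / (Fintype.card ι : ℝ) * ∑ i, ℓ (z i)) *
        log (1 / ∏ i, p i (z i))
      = 1 / (Fintype.card ι : ℝ) * ∑ i, (∏ k, p k (z k)) * ℓ (z i) * log (1 / ∏ k, p k (z k)) :=
    fun z => by simp only [mul_sum, sum_mul]; exact sum_congr rfl fun i _ => by ring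
  have hH0 : ∀ i, 0 ≤ entropy (p i) := fun i => entropy_nonneg (hp0 i) (hp1 i)
  have hrest0 : ∀ i, 0 ≤ ∑ j ∈ univ.erase i, entropy (p j) := fun i => sum_nonneg fun j _ => hH0 j
  simp only [hA, ← mul_sum]
  rw [sum_comm]
  refine abs_average_sub_average_le ht hb hH0 (fun i => sum_mul_mul_log_nonneg (hp0 i) (hp1 i) hℓ0)
    (fun i => sum_mul_mul_log_le (hp0 i) (hp1 i) hℓb) (fun i => ?_) (fun i => ?_)
  · rw [sum_prod_mul_apply_mul_log hp1]
    exact le_add_of_nonneg_right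
      (mul_nonneg (sum_nonneg fun x _ => mul_nonneg (hp0 i x) (hℓ0 x)) (hrest0 i))
  · rw [sum_prod_mul_apply_mul_log hp1, ← sum_erase_eq_sub (mem_univ i)]
    exact add_le_add_right
      (mul_le_mul_of_nonneg_right (sum_mul_le_of_forall_le (hp0 i) (hp1 i) hℓb) (hrest0 i)) _

theorem stmt_14_general {ι Z : Type*} [Fintype ι] [DecidableEq ι] [Fintype Z]
    (p : ι → Z → ℝ) (hp : ∀ i z, 0 ≤ p i z) (hpsum : ∀ i, ∑ z, p i z = 1)
    (ℓ : Z → ℝ) (b : ℝ) (hl0 : ∀ z, 0 ≤ ℓ z) (hlb : ∀ z, ℓ z ≤ b)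
    (s t : Finset ι) (hts : t ⊆ s)
    (K M N : ℕ) (hK : t.card = K) (hM : s.card = M) (hN : Fintype.card ι = N)
    (hKpos : 0 < K) :
    |(∑ z : ι → Z, (∏ i, p i (z i)) * ((1 / (N : ℝ)) * ∑ i, ℓ (z i)) *
        Real.log (1 / ∏ i, p i (z i)))
      - (1 / (K : ℝ)) * ∑ i ∈ t, ∑ zi, p i zi * ℓ zi * Real.log (1 / p i zi)|
    ≤ b * (3 - 2 * (M : ℝ) / N) *
        (∑ z : ι → Z, (∏ i, p i (z i)) * Real.log (1 / ∏ i, p i (z i)))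
      + b * (2 - 2 * (K : ℝ) / M - 1 / (K : ℝ)) *
        (∑ z : ↥s → Z, (∏ i, p i.1 (z i)) * Real.log (1 / ∏ i, p i.1 (z i)))
      + (b / (K : ℝ)) * ∑ i ∈ s \ t, ∑ zi, p i zi * Real.log (1 / p i zi) := by
  subst hK hM hN
  have ht : t.Nonempty := card_pos.1 hKpos
  obtain ⟨i, -⟩ := id ht
  obtain ⟨x, -⟩ : (univ : Finset Z).Nonempty :=
    nonempty_of_sum_ne_zero (f := p i) (by rw [hpsum i]; exact one_ne_zero)
  have hb : 0 ≤ b := (hl0 x).trans (hlb x)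
  have hH0 : ∀ i, 0 ≤ entropy (p i) := fun i => entropy_nonneg (hp i) (hpsum i)
  have hH : ∑ z : ι → Z, (∏ i, p i (z i)) * log (1 / ∏ i, p i (z i)) = ∑ i, entropy (p i) :=
    entropy_pi hpsum
  have hHs : ∑ z : ↥s → Z, (∏ i, p i.1 (z i)) * log (1 / ∏ i, p i.1 (z i))
      = ∑ i ∈ s, entropy (p i) :=
    (entropy_pi (p := fun i : s => p i) fun i => hpsum i).trans
      (sum_coe_sort s fun i => entropy (p i))
  rw [hH, hHs, sum_sdiff_eq_sub hts]
  calc _ ≤ _ := abs_participation_gap_le hp hpsum hl0 hlb hb ht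
    _ ≤ _ := mul_sub_div_le_participation_bound hb (Nat.one_le_cast.2 hKpos)
        (Nat.cast_le.2 (card_le_card hts)) (Nat.cast_le.2 (card_le_univ s))
        (sum_nonneg fun i _ => hH0 i) (sum_le_sum_of_subset_of_nonneg hts fun i _ _ => hH0 i)
        (sum_le_sum_of_subset_of_nonneg (subset_univ s) fun i _ _ => hH0 i)

/-- Selection-based participation gap bound: for selected clients `t ⊆ s ⊆ ι` with
`|t| = K`, `|s| = M`, `|ι| = N`, the gap is bounded by
`b(3 - 2M/N) H(Z^I) + b(2 - 2K/M - 1/K) H(Z^{I_p}) + (b/K) ∑_{i ∈ s \ t} H(Z_i)`. -/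
theorem stmt_14 {ι Z : Type*} [Fintype ι] [DecidableEq ι] [Fintype Z]
    (p : ι → Z → ℝ) (hp : ∀ i z, 0 ≤ p i z) (hpsum : ∀ i, ∑ z, p i z = 1)
    (ℓ : Z → ℝ) (b : ℝ) (hl0 : ∀ z, 0 ≤ ℓ z) (hlb : ∀ z, ℓ z ≤ b)
    (s t : Finset ι) (hts : t ⊆ s)
    (K M N : ℕ) (hK : t.card = K) (hM : s.card = M) (hN : Fintype.card ι = N)
    (hKpos : 0 < K) (hMpos : 0 < M) (hNpos : 0 < N) :
    |(∑ z : ι → Z, (∏ i, p i (z i)) * ((1 / (N : ℝ)) * ∑ i, ℓ (z i)) *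
        Real.log (1 / ∏ i, p i (z i)))
      - (1 / (K : ℝ)) * ∑ i ∈ t, ∑ zi, p i zi * ℓ zi * Real.log (1 / p i zi)|
    ≤ b * (3 - 2 * (M : ℝ) / N) *
        (∑ z : ι → Z, (∏ i, p i (z i)) * Real.log (1 / ∏ i, p i (z i)))
      + b * (2 - 2 * (K : ℝ) / M - 1 / (K : ℝ)) *
        (∑ z : ↥s → Z, (∏ i, p i.1 (z i)) * Real.log (1 / ∏ i, p i.1 (z i)))
      + (b / (K : ℝ)) * ∑ i ∈ s \ t, ∑ zi, p i zi * Real.log (1 / p i zi) :=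
  stmt_14_general p hp hpsum ℓ b hl0 hlb s t hts K M N hK hM hN hKpos
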